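/- arXiv:2112.05574 — 3 statements merged into one kernel-verified Lean document; each statement's English description precedes it below -/
import Mathlib

section
/- Let Γ be a group with subgroups Γ₁ ⊆ Γ₂ ⊆ Γ such that Γ₁ is a proper subgroup of Γ₂. Then the natural group homomorphism from the amalgamated free product Γ ∗_{Γ₁} Γ (double of Γ along Γ₁) to the amalgamated free product Γ ∗_{Γ₂} Γ (double of Γ along Γ₂), induced by the identity on each copy of Γ, is not injective. -/
/-- The natural homomorphism from the double `Γ ∗_{Γ₁} Γ` to the double `Γ ∗_{Γ₂} Γ`
(identity on each copy of `Γ`) is not injective when `Γ₁ < Γ₂`. -/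
theorem stmt_0 {Γ : Type*} [Group Γ] (Γ₁ Γ₂ : Subgroup Γ) (h : Γ₁ < Γ₂)
    (f : Monoid.PushoutI (fun _ : Bool => Γ₁.subtype) →*
         Monoid.PushoutI (fun _ : Bool => Γ₂.subtype))
    (hf : ∀ (i : Bool) (g : Γ),
      f (Monoid.PushoutI.of (φ := fun _ : Bool => Γ₁.subtype) i g) =
        Monoid.PushoutI.of (φ := fun _ : Bool => Γ₂.subtype) i g) :
    ¬ Function.Injective f := by
  intro hinj
  obtain ⟨x, hx2, hx1⟩ := SetLike.exists_of_lt h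
  have hφ : ∀ i : Bool, Function.Injective ((fun _ : Bool => Γ₁.subtype) i) :=
    fun _ => Γ₁.subtype_injective
  -- the element of true x * (of false x)⁻¹ is killed by f
  have key : f (Monoid.PushoutI.of (φ := fun _ : Bool => Γ₁.subtype) true x *
      (Monoid.PushoutI.of (φ := fun _ : Bool => Γ₁.subtype) false x)⁻¹) = 1 := by
    rw [map_mul, map_inv, hf, hf]
    have h1 : Monoid.PushoutI.of (φ := fun _ : Bool => Γ₂.subtype) true x =
        Monoid.PushoutI.base (fun _ : Bool => Γ₂.subtype) ⟨x, hx2⟩ :=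
      Monoid.PushoutI.of_apply_eq_base (fun _ : Bool => Γ₂.subtype) true ⟨x, hx2⟩
    have h2 : Monoid.PushoutI.of (φ := fun _ : Bool => Γ₂.subtype) false x =
        Monoid.PushoutI.base (fun _ : Bool => Γ₂.subtype) ⟨x, hx2⟩ :=
      Monoid.PushoutI.of_apply_eq_base (fun _ : Bool => Γ₂.subtype) false ⟨x, hx2⟩
    rw [h1, h2, mul_inv_cancel]
  have heq : Monoid.PushoutI.of (φ := fun _ : Bool => Γ₁.subtype) true x =
      Monoid.PushoutI.of (φ := fun _ : Bool => Γ₁.subtype) false x := by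
    have := hinj (key.trans (map_one f).symm)
    rwa [mul_inv_eq_one] at this
  have hmem : Monoid.PushoutI.of (φ := fun _ : Bool => Γ₁.subtype) true x ∈
      (Monoid.PushoutI.base (fun _ : Bool => Γ₁.subtype)).range := by
    rw [← Monoid.PushoutI.inf_of_range_eq_base_range hφ (by decide : (true:Bool) ≠ false)]
    exact ⟨⟨x, rfl⟩, ⟨x, heq.symm⟩⟩
  obtain ⟨y, hy⟩ := hmem
  rw [← Monoid.PushoutI.of_apply_eq_base (fun _ : Bool => Γ₁.subtype) true y] at hy
  have := Monoid.PushoutI.of_injective hφ true hy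
  exact hx1 (this ▸ y.2)
end

section
/- There exists a matrix g ∈ SL(3, ℤ) whose Zariski closure of the cyclic group ⟨g⟩ in SL(3, ℝ) is a maximal ℝ-split torus; more concretely, there exists g ∈ SL(3, ℤ) that is diagonalizable over ℝ with three distinct real eigenvalues λ₁ > λ₂ > λ₃ > 0, none of which equals 1, such that λ₁, λ₂, λ₃ are multiplicatively independent modulo the relation λ₁λ₂λ₃ = 1 (i.e., λ₁^{m₁} λ₂^{m₂} λ₃^{m₃} = 1 with mᵢ ∈ ℤ implies m₁ = m₂ = m₃). -/
/-!
Take for `g` the companion matrix of `X³ - 6X² + 9X - 1`. Writing `x = 2 + 2cos s`, the cubic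
becomes `2cos 3s + 1`, so its roots are `λₖ = 2 + 2cos (2ᵏ · 2π/9)`, `k = 0, 1, 2`; the transposed
Vandermonde matrix of the `λₖ` diagonalizes `g`, and `det g = 1` gives `λ₀λ₁λ₂ = 1`.

The cubic is irreducible over `ℚ` (already mod 2), and `x ↦ (x - 2)²` permutes its roots
cyclically, so every relation `λ₀^a λ₁^b λ₂^c = 1` also holds for `(λ₁, λ₂, λ₀)`. Taking
logarithms, these two linear relations together with `∑ log λₖ = 0` force `a = b = c`, because the
quadratic form `x₀² + x₀x₁ + x₁²` is positive definite.
-/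

open Polynomial Real Matrix

/-- Both evaluations factor through the field `AdjoinRoot p`, where they are injective. -/
theorem prod_aeval_zpow_eq_one_of_aeval_eq_zero {K L ι : Type*} [Field K] [Field L]
    [Algebra K L] [Fintype ι] {p : K[X]} (hp : Irreducible p) {x y : L} (hx : aeval x p = 0)
    (hy : aeval y p = 0) (f : ι → K[X]) (m : ι → ℤ) (h : ∏ i, aeval x (f i) ^ m i = 1) :
    ∏ i, aeval y (f i) ^ m i = 1 := by
  have : Fact (Irreducible p) := ⟨hp⟩
  have lift_prod (z : L) (hz : aeval z p = 0) :
      AdjoinRoot.lift (algebraMap K L) z hz (∏ i, AdjoinRoot.mk p (f i) ^ m i) =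
        ∏ i, aeval z (f i) ^ m i := by
    simp only [map_prod, map_zpow₀]
    rfl
  have hu : ∏ i, AdjoinRoot.mk p (f i) ^ m i = 1 :=
    (map_eq_one_iff _ (RingHom.injective _)).1 ((lift_prod x hx).trans h)
  rw [← lift_prod y hy, hu, map_one]

theorem Matrix.prod_eq_one_of_inv_mul_map_mul_eq_diagonal {ι R : Type*} [Fintype ι]
    [DecidableEq ι] [CommRing R] (g : SpecialLinearGroup ι ℤ) {P : Matrix ι ι R}
    (hP : IsUnit P) {d : ι → R}
    (h : P⁻¹ * (g : Matrix ι ι ℤ).map (Int.cast : ℤ → R) * P = diagonal d) :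
    ∏ i, d i = 1 := by
  rw [← det_diagonal, ← h, det_conj' hP]
  exact (RingHom.map_det (Int.castRingHom R) (g : Matrix ι ι ℤ)).symm.trans (by simp)

theorem Matrix.companion_mul_vandermonde_transpose {R : Type*} [CommRing R] {c₀ c₁ c₂ : R}
    (d : Fin 3 → R) (hd : ∀ j, d j ^ 3 = c₀ + c₁ * d j + c₂ * d j ^ 2) :
    !![0, 1, 0; 0, 0, 1; c₀, c₁, c₂] * (vandermonde d)ᵀ = (vandermonde d)ᵀ * diagonal d := by
  ext i j
  rw [mul_apply, mul_diagonal]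
  fin_cases i <;> simp [Fin.sum_univ_three, vandermonde]
  · ring
  · linear_combination (hd j).symm

theorem Real.int_mul_log_add_eq_zero {u v w : ℝ} (hu : 0 < u) (hv : 0 < v) (hw : 0 < w)
    {a b c : ℤ} (h : u ^ a * v ^ b * w ^ c = 1) : a * log u + b * log v + c * log w = 0 := by
  have := congrArg log h
  rwa [log_mul (by positivity) (by positivity), log_mul (by positivity) (by positivity),
    log_zpow, log_zpow, log_zpow, log_one] at this

theorem eq_and_eq_of_cyclic_relations {x₀ x₁ x₂ a b c : ℝ} (hsum : x₀ + x₁ + x₂ = 0)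
    (hx₀ : x₀ ≠ 0) (h₁ : a * x₀ + b * x₁ + c * x₂ = 0) (h₂ : a * x₁ + b * x₂ + c * x₀ = 0) :
    a = b ∧ b = c := by
  have hQ : 0 < x₀ ^ 2 + x₀ * x₁ + x₁ ^ 2 := by
    nlinarith [sq_nonneg (x₀ + 2 * x₁), sq_pos_of_ne_zero hx₀]
  have hac : (a - c) * (x₀ ^ 2 + x₀ * x₁ + x₁ ^ 2) = 0 := by
    linear_combination (x₀ + x₁) * h₁ + x₁ * h₂ - (b * x₁ + c * (x₀ + x₁)) * hsum
  have hbc : (b - c) * (x₀ ^ 2 + x₀ * x₁ + x₁ ^ 2) = 0 := by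
    linear_combination x₁ * h₁ - x₀ * h₂ + (b * x₀ - c * x₁) * hsum
  have := (mul_eq_zero.1 hac).resolve_right hQ.ne'
  have := (mul_eq_zero.1 hbc).resolve_right hQ.ne'
  constructor <;> linarith

theorem eq_and_eq_of_zpow_mul_zpow_mul_zpow_eq_one {l₀ l₁ l₂ : ℝ} (h₀ : 0 < l₀) (h₁ : 0 < l₁)
    (h₂ : 0 < l₂) (hprod : l₀ * l₁ * l₂ = 1) (hl₀ : l₀ ≠ 1)
    (hshift : ∀ a b c : ℤ, l₀ ^ a * l₁ ^ b * l₂ ^ c = 1 → l₁ ^ a * l₂ ^ b * l₀ ^ c = 1)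
    {a b c : ℤ} (h : l₀ ^ a * l₁ ^ b * l₂ ^ c = 1) : a = b ∧ b = c := by
  have hsum : log l₀ + log l₁ + log l₂ = 0 := by
    rw [← log_mul h₀.ne' h₁.ne', ← log_mul (by positivity) h₂.ne', hprod, log_one]
  exact_mod_cast eq_and_eq_of_cyclic_relations hsum (log_ne_zero_of_pos_of_ne_one h₀ hl₀)
    (int_mul_log_add_eq_zero h₀ h₁ h₂ h) (int_mul_log_add_eq_zero h₁ h₂ h₀ (hshift a b c h))

namespace SplitTorusExample

noncomputable def cubic : ℤ[X] := X ^ 3 - 6 * X ^ 2 + 9 * X - 1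

theorem cubic_monic : cubic.Monic := by
  unfold cubic
  monicity!

theorem irreducible_cubic : Irreducible cubic := by
  refine Monic.irreducible_of_irreducible_map (φ := Int.castRingHom (ZMod 2)) cubic cubic_monic ?_
  simp only [cubic, Polynomial.map_sub, Polynomial.map_add, Polynomial.map_pow,
    Polynomial.map_mul, Polynomial.map_one, Polynomial.map_X, Polynomial.map_ofNat]
  have hmonic : (X ^ 3 - 6 * X ^ 2 + 9 * X - 1 : (ZMod 2)[X]).Monic := by monicity!
  have hdeg : (X ^ 3 - 6 * X ^ 2 + 9 * X - 1 : (ZMod 2)[X]).natDegree = 3 := by compute_degree!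
  rw [hmonic.irreducible_iff_roots_eq_zero_of_degree_le_three (by omega) (by omega)]
  refine Multiset.eq_zero_of_forall_notMem fun a ha => ?_
  rw [mem_roots hmonic.ne_zero, IsRoot] at ha
  simp only [eval_sub, eval_add, eval_mul, eval_pow, eval_X, eval_one, eval_ofNat] at ha
  revert a ha
  decide

theorem irreducible_cubic_map : Irreducible (cubic.map (algebraMap ℤ ℚ)) :=
  (IsPrimitive.Int.irreducible_iff_irreducible_map_cast cubic_monic.isPrimitive).1 irreducible_cubic

theorem aeval_cubic (x : ℝ) : aeval x cubic = x ^ 3 - 6 * x ^ 2 + 9 * x - 1 := by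
  simp only [cubic, map_sub, map_add, map_mul, map_pow, aeval_X, map_one, map_ofNat]

noncomputable def eig (s : ℝ) : ℝ := 2 + 2 * cos s

theorem eig_sub_two_sq (s : ℝ) : (eig s - 2) ^ 2 = eig (2 * s) := by
  rw [eig, eig, cos_two_mul]
  ring

theorem eig_lt_eig {s t : ℝ} (hs : 0 ≤ s) (hst : s < t) (ht : t ≤ π) : eig t < eig s := by
  have := cos_lt_cos_of_nonneg_of_le_pi hs ht hst
  rw [eig, eig]
  linarith

theorem eig_pos {s : ℝ} (hs : 0 ≤ s) (hπ : s < π) : 0 < eig s := by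
  simpa [eig] using eig_lt_eig hs hπ le_rfl

theorem aeval_cubic_eig (s : ℝ) : aeval (eig s) cubic = 2 * cos (3 * s) + 1 := by
  rw [aeval_cubic, eig, cos_three_mul]
  ring

noncomputable def lam : Fin 3 → ℝ := ![eig (2 * π / 9), eig (4 * π / 9), eig (8 * π / 9)]

theorem aeval_cubic_lam (i : Fin 3) : aeval (lam i) cubic = 0 := by
  have h : cos (2 * π / 3) = -(1 / 2) := by
    rw [show 2 * π / 3 = π - π / 3 by ring, cos_pi_sub, cos_pi_div_three]
  fin_cases i <;> simp only [lam, Fin.zero_eta, Fin.mk_one, Fin.reduceFinMk, Matrix.cons_val,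
    aeval_cubic_eig]
  · rw [show 3 * (2 * π / 9) = 2 * π / 3 by ring, h]; norm_num
  · rw [show 3 * (4 * π / 9) = -(2 * π / 3) + 2 * π by ring, cos_add_two_pi, cos_neg, h]; norm_num
  · rw [show 3 * (8 * π / 9) = 2 * π / 3 + 2 * π by ring, cos_add_two_pi, h]; norm_num

theorem lam_sub_two_sq (i : Fin 3) : (lam i - 2) ^ 2 = lam (i + 1) := by
  fin_cases i <;> simp only [lam, Fin.zero_eta, Fin.mk_one, Fin.reduceFinMk, Fin.reduceAdd,
    Matrix.cons_val, eig_sub_two_sq]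
  · rw [show 2 * (2 * π / 9) = 4 * π / 9 by ring]
  · rw [show 2 * (4 * π / 9) = 8 * π / 9 by ring]
  · rw [show 2 * (8 * π / 9) = -(2 * π / 9) + 2 * π by ring, eig, eig, cos_add_two_pi, cos_neg]

theorem lam_strictAnti : StrictAnti lam := by
  rw [Fin.strictAnti_iff_succ_lt]
  intro i
  fin_cases i <;> exact eig_lt_eig (by positivity) (by linarith [pi_pos]) (by linarith [pi_pos])

theorem lam_pos (i : Fin 3) : 0 < lam i :=
  (eig_pos (by positivity) (by linarith [pi_pos])).trans_le
    (lam_strictAnti.antitone (Fin.le_last i))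

theorem lam_ne_one (i : Fin 3) : lam i ≠ 1 := by
  intro h
  have := aeval_cubic_lam i
  rw [h, aeval_cubic] at this
  norm_num at this

theorem lam_zpow_shift (a b c : ℤ) (h : lam 0 ^ a * lam 1 ^ b * lam 2 ^ c = 1) :
    lam 1 ^ a * lam 2 ^ b * lam 0 ^ c = 1 := by
  let q : ℚ[X] := (X - 2) ^ 2
  have aeval_q (i : Fin 3) : aeval (lam i) q = lam (i + 1) := by
    simp only [q, map_pow, map_sub, aeval_X, map_ofNat, lam_sub_two_sq]
  have root (i : Fin 3) : aeval (lam i) (cubic.map (algebraMap ℤ ℚ)) = 0 := by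
    rw [aeval_map_algebraMap, aeval_cubic_lam]
  have := prod_aeval_zpow_eq_one_of_aeval_eq_zero irreducible_cubic_map (root 0) (root 1)
    ![X, q, q.comp q] ![a, b, c] (by simpa [Fin.prod_univ_three, aeval_comp, aeval_q] using h)
  simpa [Fin.prod_univ_three, aeval_comp, aeval_q] using this

def companion : SpecialLinearGroup (Fin 3) ℤ :=
  ⟨!![0, 1, 0; 0, 0, 1; 1, -9, 6], by simp [det_fin_three]⟩

theorem isUnit_vandermonde_lam_transpose : IsUnit (vandermonde lam)ᵀ := by
  rw [isUnit_iff_isUnit_det, det_transpose, isUnit_iff_ne_zero, det_vandermonde_ne_zero_iff]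
  exact lam_strictAnti.injective

theorem inv_mul_companion_mul_eq_diagonal :
    ((vandermonde lam)ᵀ)⁻¹ * (companion : Matrix (Fin 3) (Fin 3) ℤ).map (Int.cast : ℤ → ℝ) *
      (vandermonde lam)ᵀ = diagonal lam := by
  have hmap : (companion : Matrix (Fin 3) (Fin 3) ℤ).map (Int.cast : ℤ → ℝ) =
      !![0, 1, 0; 0, 0, 1; 1, -9, 6] := by
    ext i j
    fin_cases i <;> fin_cases j <;> simp [companion]
  have hroot (j : Fin 3) : lam j ^ 3 = 1 + -9 * lam j + 6 * lam j ^ 2 := by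
    linear_combination (aeval_cubic (lam j)).symm.trans (aeval_cubic_lam j)
  rw [hmap, mul_assoc, companion_mul_vandermonde_transpose lam hroot, ← mul_assoc,
    nonsing_inv_mul _ ((isUnit_iff_isUnit_det _).1 isUnit_vandermonde_lam_transpose), one_mul]

end SplitTorusExample

/-- There is `g ∈ SL(3,ℤ)` which is diagonalizable over `ℝ` with distinct positive real
eigenvalues `λ₀ > λ₁ > λ₂ > 0`, none equal to `1`, that are multiplicatively independent
modulo the relation `λ₀λ₁λ₂ = 1` (so the Zariski closure of `⟨g⟩` is a maximal ℝ-split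
torus of `SL(3,ℝ)`). -/
theorem stmt_4 :
    ∃ (g : Matrix.SpecialLinearGroup (Fin 3) ℤ) (P : Matrix (Fin 3) (Fin 3) ℝ)
      (lam : Fin 3 → ℝ),
      IsUnit P ∧
      P⁻¹ * ((g : Matrix (Fin 3) (Fin 3) ℤ).map (Int.cast : ℤ → ℝ)) * P =
        Matrix.diagonal lam ∧
      lam 0 > lam 1 ∧ lam 1 > lam 2 ∧ lam 2 > 0 ∧
      (∀ i, lam i ≠ 1) ∧
      (∀ m : Fin 3 → ℤ, lam 0 ^ m 0 * lam 1 ^ m 1 * lam 2 ^ m 2 = 1 →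
        m 0 = m 1 ∧ m 1 = m 2) :=
  open SplitTorusExample in
  have hprod : lam 0 * lam 1 * lam 2 = 1 := by
    simpa [Fin.prod_univ_three] using prod_eq_one_of_inv_mul_map_mul_eq_diagonal companion
      isUnit_vandermonde_lam_transpose inv_mul_companion_mul_eq_diagonal
  ⟨companion, (vandermonde lam)ᵀ, lam, isUnit_vandermonde_lam_transpose,
    inv_mul_companion_mul_eq_diagonal, lam_strictAnti (by decide), lam_strictAnti (by decide),
    lam_pos 2, lam_ne_one, fun _ hm => eq_and_eq_of_zpow_mul_zpow_mul_zpow_eq_one (lam_pos 0)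
    (lam_pos 1) (lam_pos 2) hprod (lam_ne_one 0) lam_zpow_shift hm⟩
end

section
/- Let X be a proper geodesic metric space, Γ₁ and Γ₂ groups acting on X by isometries with both orbits Γ₁·x₀ and Γ₂·x₀ being M-dense in X for some M > 0 (cocompactness), and let ρ : Γ₁ ∗_{⟨w⟩} Γ₂ → Isom(X) restrict to these actions, where Γ₁ ∩ Γ₂ = ⟨w⟩ inside the amalgam. Suppose the image of ρ is discrete (any orbit has finite point-stabilizers and is locally finite) and ρ is faithful. If Y ⊆ X is a subset invariant under ρ(w), contained in the orbit-closures of both Γ₁ and Γ₂ in the above M-dense sense, then Y lies within bounded distance of the axis (min-set) of ρ(w): there exists C > 0 with dist(y, Min(ρ(w))) ≤ C for all y ∈ Y. -/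
/-- Let a group `D` (the image of the amalgam `Γ₁ ∗_{⟨w⟩} Γ₂`) act faithfully, discretely and
by isometries on a proper geodesic metric space `X`, with `Γ₁, Γ₂ ≤ D` having `M`-dense
orbits and `Γ₁ ⊓ Γ₂ = ⟨w⟩`. Then any `w`-invariant subset `Y ⊆ X` lies within bounded
distance of the min-set of `w`. -/
theorem stmt_15 {X : Type*} [MetricSpace X] [ProperSpace X]
    (hgeo : ∀ x y : X, ∃ γ : ℝ → X, γ 0 = x ∧ γ (dist x y) = y ∧
      ∀ s ∈ Set.Icc (0 : ℝ) (dist x y), ∀ u ∈ Set.Icc (0 : ℝ) (dist x y),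
        dist (γ s) (γ u) = |s - u|)
    {D : Type*} [Group D] [MulAction D X]
    (hisom : ∀ g : D, Isometry (fun x : X => g • x))
    (Γ₁ Γ₂ : Subgroup D) (w : D) (hw : Γ₁ ⊓ Γ₂ = Subgroup.zpowers w)
    (hgen : Subgroup.closure ((Γ₁ : Set D) ∪ (Γ₂ : Set D)) = ⊤)
    (x₀ : X) (M : ℝ) (hM : 0 < M)
    (hd₁ : ∀ x : X, ∃ γ ∈ Γ₁, dist x (γ • x₀) ≤ M)
    (hd₂ : ∀ x : X, ∃ γ ∈ Γ₂, dist x (γ • x₀) ≤ M)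
    (hdisc : ∀ (x : X) (r : ℝ), {g : D | dist (g • x) x ≤ r}.Finite)
    (hfaith : ∀ g : D, (∀ x : X, g • x = x) → g = 1)
    (Y : Set X) (hY : ∀ y ∈ Y, w • y ∈ Y) :
    ∃ C > 0, ∀ y ∈ Y, ∃ x : X,
      dist (w • x) x = (⨅ z : X, dist (w • z) z) ∧ dist y x ≤ C := by
  classical
  have hdist : ∀ (g : D) (p q : X), dist (g • p) (g • q) = dist p q :=
    fun g p q => (hisom g).dist_eq p q
  have hne : Nonempty X := ⟨x₀⟩
  set m : ℝ := ⨅ z : X, dist (w • z) z with hm_def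
  have hbdd : BddBelow (Set.range fun z : X => dist (w • z) z) :=
    ⟨0, by rintro r ⟨z, rfl⟩; exact dist_nonneg⟩
  have hm_le : ∀ z : X, m ≤ dist (w • z) z := fun z => ciInf_le hbdd z
  -- Step 1: the infimum of the displacement function of `w` is attained.
  have hmin : ∃ xhat : X, dist (w • xhat) xhat = m := by
    have hseq : ∀ n : ℕ, ∃ zc : X, dist (w • zc) zc < m + 1 / ((n : ℝ) + 1) := by
      intro n
      apply exists_lt_of_ciInf_lt
      have h0 : (0 : ℝ) < 1 / ((n : ℝ) + 1) := by positivity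
      rw [← hm_def]; linarith
    choose z hz using hseq
    choose γ hγΓ hγM using fun n => hd₁ (z n)
    set c : ℕ → D := fun n => (γ n)⁻¹ * w * γ n with hc_def
    set u : ℕ → X := fun n => (γ n)⁻¹ • z n with hu_def
    have hγu : ∀ n, γ n • u n = z n := fun n => smul_inv_smul _ _
    have huK : ∀ n, u n ∈ Metric.closedBall x₀ M := by
      intro n
      rw [Metric.mem_closedBall]
      calc dist (u n) x₀ = dist (γ n • u n) (γ n • x₀) := (hdist (γ n) _ _).symm
        _ = dist (z n) (γ n • x₀) := by rw [hγu n]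
        _ ≤ M := hγM n
    have hcu : ∀ n, dist (c n • u n) (u n) = dist (w • z n) (z n) := by
      intro n
      have h1 : c n • u n = (γ n)⁻¹ • (w • z n) := by
        show ((γ n)⁻¹ * w * γ n) • ((γ n)⁻¹ • z n) = _
        rw [← mul_smul, ← mul_smul]
        congr 1
        group
      rw [h1]
      show dist ((γ n)⁻¹ • (w • z n)) ((γ n)⁻¹ • z n) = _
      exact hdist _ _ _
    have hcF : ∀ n, c n ∈ (hdisc x₀ (m + 2 * M + 1)).toFinset := by
      intro n
      rw [Set.Finite.mem_toFinset]
      have h1 : dist (c n • x₀) (c n • u n) = dist x₀ (u n) := hdist _ _ _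
      have h2 : dist (u n) x₀ ≤ M := Metric.mem_closedBall.mp (huK n)
      have h3 : dist (c n • u n) (u n) < m + 1 := by
        have h4 : 1 / ((n : ℝ) + 1) ≤ 1 := by
          rw [div_le_one (by positivity)]
          have : (0 : ℝ) ≤ (n : ℝ) := Nat.cast_nonneg n
          linarith
        have := hz n
        rw [hcu n]; linarith
      have h5 : dist x₀ (u n) ≤ M := by rw [dist_comm]; exact h2
      show dist (c n • x₀) x₀ ≤ m + 2 * M + 1
      calc dist (c n • x₀) x₀
          ≤ dist (c n • x₀) (c n • u n) + dist (c n • u n) (u n) + dist (u n) x₀ :=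
            dist_triangle4 _ _ _ _
        _ ≤ M + (m + 1) + M := by rw [h1]; linarith
        _ = m + 2 * M + 1 := by ring
    -- pigeonhole: one conjugate occurs infinitely often
    obtain ⟨g, hfib⟩ : ∃ g : D, {n : ℕ | c n = g}.Infinite := by
      set c' : ℕ → (hdisc x₀ (m + 2 * M + 1)).toFinset := fun n => ⟨c n, hcF n⟩ with hc'
      obtain ⟨y, hy⟩ := Finite.exists_infinite_fiber c'
      refine ⟨y.1, Set.Infinite.mono ?_ (Set.infinite_coe_iff.mp hy)⟩
      intro n hn
      have : c' n = y := hn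
      simpa [hc'] using congrArg Subtype.val this
    obtain ⟨n₁, hn₁⟩ := hfib.nonempty
    have hgn₁ : c n₁ = g := hn₁
    set φ : X → ℝ := fun x => dist (g • x) x with hφ_def
    have hφc : Continuous φ := ((hisom g).continuous).dist continuous_id
    obtain ⟨xs, hxsK, hxsmin⟩ := (isCompact_closedBall x₀ M).exists_isMinOn
      ⟨x₀, Metric.mem_closedBall_self (le_of_lt hM)⟩ hφc.continuousOn
    have hφxs : φ xs = dist (w • (γ n₁ • xs)) (γ n₁ • xs) := by
      have h1 : γ n₁ • (g • xs) = w • (γ n₁ • xs) := by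
        rw [← hgn₁]
        show γ n₁ • (((γ n₁)⁻¹ * w * γ n₁) • xs) = _
        rw [← mul_smul, ← mul_smul]
        congr 1
        group
      calc φ xs = dist (g • xs) xs := rfl
        _ = dist (γ n₁ • (g • xs)) (γ n₁ • xs) := (hdist _ _ _).symm
        _ = dist (w • (γ n₁ • xs)) (γ n₁ • xs) := by rw [h1]
    have hv_ge : m ≤ φ xs := by rw [hφxs]; exact hm_le _
    have hv_le : φ xs ≤ m := by
      apply le_of_forall_pos_le_add
      intro ε hε
      obtain ⟨N, hN⟩ := exists_nat_one_div_lt hε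
      obtain ⟨n, hn_mem, hn_gt⟩ := hfib.exists_gt N
      have hcn : c n = g := hn_mem
      have h1 : φ xs ≤ φ (u n) := (isMinOn_iff.mp hxsmin) (u n) (huK n)
      have h2 : φ (u n) = dist (w • z n) (z n) := by
        calc φ (u n) = dist (g • u n) (u n) := rfl
          _ = dist (c n • u n) (u n) := by rw [hcn]
          _ = dist (w • z n) (z n) := hcu n
      have h3 : dist (w • z n) (z n) < m + 1 / ((n : ℝ) + 1) := hz n
      have h4 : 1 / ((n : ℝ) + 1) < ε := by
        have hNn : ((N : ℝ) + 1) ≤ ((n : ℝ) + 1) := by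
          have : (N : ℝ) ≤ (n : ℝ) := by exact_mod_cast le_of_lt hn_gt
          linarith
        have h5 : 1 / ((n : ℝ) + 1) ≤ 1 / ((N : ℝ) + 1) :=
          one_div_le_one_div_of_le (by positivity) hNn
        linarith
      linarith
    exact ⟨γ n₁ • xs, by rw [← hφxs]; linarith⟩
  obtain ⟨xhat, hxhat⟩ := hmin
  -- Step 2: uniform bound using the finite set of elements moving `x₀` by at most `2M`.
  set P : D → Prop := fun h => ∃ a : D, a ∈ Γ₁ ∧ ∃ b : D, b ∈ Γ₂ ∧ a⁻¹ * b = h with hP_def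
  set Df : D → ℝ := fun h => if hh : P h then dist (hh.choose • x₀) xhat else 0 with hDf_def
  set S : Finset D := (hdisc x₀ (2 * M)).toFinset with hS_def
  have hS1 : (1 : D) ∈ S := by
    rw [hS_def, Set.Finite.mem_toFinset]
    show dist ((1 : D) • x₀) x₀ ≤ 2 * M
    rw [one_smul, dist_self]; linarith
  have hSne : S.Nonempty := ⟨1, hS1⟩
  set B : ℝ := S.sup' hSne Df with hB_def
  have hDf0 : ∀ h : D, 0 ≤ Df h := by
    intro h
    rw [hDf_def]
    dsimp only
    split_ifs
    · exact dist_nonneg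
    · exact le_refl 0
  have hB0 : 0 ≤ B := le_trans (hDf0 1) (Finset.le_sup' Df hS1)
  refine ⟨M + B, by linarith, ?_⟩
  intro y _hy
  obtain ⟨a, haΓ, haM⟩ := hd₁ y
  obtain ⟨b, hbΓ, hbM⟩ := hd₂ y
  have hP : P (a⁻¹ * b) := ⟨a, haΓ, b, hbΓ, rfl⟩
  obtain ⟨ha₀Γ, b₀, hb₀Γ, hab₀⟩ := hP.choose_spec
  set a₀ : D := hP.choose with ha₀_def
  -- a₀⁻¹ * b₀ = a⁻¹ * b, hence a₀ * a⁻¹ = b₀ * b⁻¹ ∈ Γ₁ ⊓ Γ₂ = ⟨w⟩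
  have hkey : a₀ * a⁻¹ = b₀ * b⁻¹ := by
    have h2 : b = a * (a₀⁻¹ * b₀) := by rw [hab₀]; group
    rw [h2]; group
  have hmem : a₀ * a⁻¹ ∈ Γ₁ ⊓ Γ₂ := by
    rw [Subgroup.mem_inf]
    refine ⟨mul_mem ha₀Γ (inv_mem haΓ), ?_⟩
    rw [hkey]
    exact mul_mem hb₀Γ (inv_mem hbΓ)
  rw [hw] at hmem
  obtain ⟨s, hs⟩ := Subgroup.mem_zpowers_iff.mp hmem
  have ha_eq : a = (w ^ s)⁻¹ * a₀ := by rw [hs]; group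
  refine ⟨(w ^ s)⁻¹ • xhat, ?_, ?_⟩
  · -- `(w^s)⁻¹ • xhat` is also a minimizer, since `w` commutes with `w^s`
    have hcomm : w * (w ^ s)⁻¹ = (w ^ s)⁻¹ * w :=
      (((Commute.refl w).zpow_right s).inv_right).eq
    calc dist (w • (w ^ s)⁻¹ • xhat) ((w ^ s)⁻¹ • xhat)
        = dist ((w ^ s)⁻¹ • (w • xhat)) ((w ^ s)⁻¹ • xhat) := by
          rw [← mul_smul, hcomm, mul_smul]
      _ = dist (w • xhat) xhat := hdist _ _ _
      _ = m := hxhat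
  · have h1 : a • x₀ = (w ^ s)⁻¹ • (a₀ • x₀) := by rw [ha_eq, mul_smul]
    have h2 : dist (a • x₀) ((w ^ s)⁻¹ • xhat) = dist (a₀ • x₀) xhat := by
      rw [h1]; exact hdist _ _ _
    have h3 : Df (a⁻¹ * b) = dist (a₀ • x₀) xhat := by
      rw [hDf_def]
      exact dif_pos hP
    have h4 : (a⁻¹ * b) ∈ S := by
      rw [hS_def, Set.Finite.mem_toFinset]
      show dist ((a⁻¹ * b) • x₀) x₀ ≤ 2 * M
      have e1 : a • ((a⁻¹ * b) • x₀) = b • x₀ := by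
        rw [← mul_smul]
        congr 1
        group
      calc dist ((a⁻¹ * b) • x₀) x₀
          = dist (a • ((a⁻¹ * b) • x₀)) (a • x₀) := (hdist _ _ _).symm
        _ = dist (b • x₀) (a • x₀) := by rw [e1]
        _ ≤ dist (b • x₀) y + dist y (a • x₀) := dist_triangle _ _ _
        _ ≤ 2 * M := by rw [dist_comm (b • x₀) y]; linarith
    have h6 : Df (a⁻¹ * b) ≤ B := Finset.le_sup' Df h4
    calc dist y ((w ^ s)⁻¹ • xhat)
        ≤ dist y (a • x₀) + dist (a • x₀) ((w ^ s)⁻¹ • xhat) := dist_triangle _ _ _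
      _ ≤ M + B := by rw [h2, ← h3]; linarith
end
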